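/- The quotient of the 2-torus S¹ × S¹ by the diagonal ℤ/2-action of simultaneous complex conjugation is homeomorphic to the 2-sphere S². -/

import Mathlib

/-- the n-torus, the product of n copies of the unit circle in ℂ -/
def Torus (n : ℕ) : Type := Fin n → Circle

noncomputable instance (n : ℕ) : TopologicalSpace (Torus n) := by unfold Torus; infer_instance

/-- simultaneous complex conjugation on the torus (on the unit circle,
complex conjugation coincides with inversion) -/
noncomputable def torusConj {n : ℕ} (x : Torus n) : Torus n := fun i => (x i)⁻¹

/-- the quotient of the n-torus by the diagonal conjugation action of ℤ/2 -/
def TorusQuot (n : ℕ) : Type := Quot (fun a b : Torus n => torusConj a = b)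

noncomputable instance (n : ℕ) : TopologicalSpace (TorusQuot n) := by unfold TorusQuot; infer_instance


/-!
The functions `Re z`, `Re w`, `Im z Im w` separate the orbits of conjugation on the torus and map
it onto the pillowcase `c² = (1 - a²)(1 - b²)`, `|a|, |b| ≤ 1`, in `ℝ³`. Every open ray from the
origin meets the pillowcase exactly once, so radial projection turns these invariants into a
continuous bijection from the quotient onto the unit sphere; it is a homeomorphism because the
quotient is compact and the sphere Hausdorff.
-/

open Complex

namespace Circle

lemma re_sq_add_im_sq (z : Circle) : (z : ℂ).re ^ 2 + (z : ℂ).im ^ 2 = 1 := by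
  simpa [normSq_apply, sq] using normSq_coe z

lemma re_inv (z : Circle) : ((z⁻¹ : Circle) : ℂ).re = (z : ℂ).re := by
  simp

lemma im_inv (z : Circle) : ((z⁻¹ : Circle) : ℂ).im = -(z : ℂ).im := by
  simp

lemma inv_eq_self_of_im_eq_zero {z : Circle} (h : (z : ℂ).im = 0) : z⁻¹ = z :=
  ext <| Complex.ext (re_inv z) (by rw [im_inv, h, neg_zero])

lemma eq_or_eq_inv_of_re_eq {z w : Circle} (h : (w : ℂ).re = (z : ℂ).re) : w = z ∨ w = z⁻¹ := by
  have him : (w : ℂ).im ^ 2 = (z : ℂ).im ^ 2 := by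
    linarith [re_sq_add_im_sq z, re_sq_add_im_sq w, congrArg (· ^ 2) h]
  rcases sq_eq_sq_iff_eq_or_eq_neg.mp him with h' | h'
  · exact .inl <| ext <| Complex.ext h h'
  · exact .inr <| ext <| Complex.ext (h.trans (re_inv z).symm) (h'.trans (im_inv z).symm)

lemma exists_re_im_eq {a b : ℝ} (h : a ^ 2 + b ^ 2 = 1) :
    ∃ z : Circle, (z : ℂ).re = a ∧ (z : ℂ).im = b :=
  ⟨⟨⟨a, b⟩, by simp [Submonoid.unitSphere, Complex.norm_def, normSq_apply, ← sq, h]⟩, rfl, rfl⟩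

end Circle

def pillowcase : Set (EuclideanSpace ℝ (Fin 3)) :=
  {v | v 0 ^ 2 ≤ 1 ∧ v 1 ^ 2 ≤ 1 ∧ v 2 ^ 2 = (1 - v 0 ^ 2) * (1 - v 1 ^ 2)}

lemma ne_zero_of_mem_pillowcase {v : EuclideanSpace ℝ (Fin 3)} (hv : v ∈ pillowcase) : v ≠ 0 := by
  rintro rfl
  simp [pillowcase] at hv

lemma eq_one_of_smul_mem_pillowcase {v : EuclideanSpace ℝ (Fin 3)} (hv : v ∈ pillowcase)
    {t : ℝ} (ht : 0 < t) (htv : t • v ∈ pillowcase) : t = 1 := by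
  obtain ⟨ha, hb, hc⟩ := hv
  obtain ⟨hta, htb, htc⟩ := htv
  simp only [PiLp.smul_apply, smul_eq_mul, mul_pow] at hta htb htc
  have key : (1 - t ^ 2) * (1 - t ^ 2 * v 0 ^ 2 * v 1 ^ 2) = 0 := by
    linear_combination t ^ 2 * hc - htc
  rcases mul_eq_zero.mp key with h | h
  · nlinarith
  · -- `t² v₀² v₁² = 1` with `t² v₀² ≤ 1` and `v₁² ≤ 1` forces `v₁² = 1`; symmetrically `v₀² = 1`
    have hb1 : v 1 ^ 2 = 1 := by
      nlinarith [sq_nonneg (v 1), mul_nonneg (sq_nonneg t) (sq_nonneg (v 0))]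
    have ha1 : v 0 ^ 2 = 1 := by
      nlinarith [sq_nonneg (v 0), mul_nonneg (sq_nonneg t) (sq_nonneg (v 1))]
    rw [ha1, hb1] at h
    nlinarith

lemma exists_pos_smul_mem_pillowcase {p : EuclideanSpace ℝ (Fin 3)} (hp : ‖p‖ = 1) :
    ∃ t : ℝ, 0 < t ∧ t • p ∈ pillowcase := by
  have hsum : p 0 ^ 2 + p 1 ^ 2 + p 2 ^ 2 = 1 := by
    rw [EuclideanSpace.norm_eq, Real.sqrt_eq_one, Fin.sum_univ_three] at hp
    simpa [Real.norm_eq_abs, sq_abs] using hp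
  have h4 : 4 * (p 0 ^ 2 * p 1 ^ 2) ≤ 1 := by
    nlinarith [sq_nonneg (p 0 ^ 2 - p 1 ^ 2), sq_nonneg (p 2)]
  set d := √(1 - 4 * (p 0 ^ 2 * p 1 ^ 2))
  have hd : d ^ 2 = 1 - 4 * (p 0 ^ 2 * p 1 ^ 2) := Real.sq_sqrt (by linarith)
  have hd0 : 0 ≤ d := Real.sqrt_nonneg _
  -- `s = t²` must solve `p₀² p₁² s² - s + 1 = 0`; take its smaller root
  set s := 2 / (1 + d)
  have hs : 0 < s := by positivity
  refine ⟨√s, Real.sqrt_pos.mpr hs, ?_⟩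
  simp only [pillowcase, Set.mem_ofPred_eq, PiLp.smul_apply, smul_eq_mul, mul_pow,
    Real.sq_sqrt hs.le]
  refine ⟨?_, ?_, ?_⟩
  · rw [div_mul_eq_mul_div, div_le_one (by positivity)]
    nlinarith [sq_nonneg (p 0 * p 2), sq_nonneg (d - (2 * p 0 ^ 2 - 1))]
  · rw [div_mul_eq_mul_div, div_le_one (by positivity)]
    nlinarith [sq_nonneg (p 1 * p 2), sq_nonneg (d - (2 * p 1 ^ 2 - 1))]
  · have hroot : p 0 ^ 2 * p 1 ^ 2 * s ^ 2 - s + 1 = 0 := by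
      simp only [s]
      field_simp
      linear_combination hd
    linear_combination s * hsum - hroot

lemma eq_of_inv_norm_smul_eq_of_mem_pillowcase {v w : EuclideanSpace ℝ (Fin 3)}
    (hv : v ∈ pillowcase) (hw : w ∈ pillowcase) (h : ‖v‖⁻¹ • v = ‖w‖⁻¹ • w) : v = w := by
  have hv0 := ne_zero_of_mem_pillowcase hv
  have hw0 := ne_zero_of_mem_pillowcase hw
  obtain ⟨t, ht, rfl⟩ :=
    ((sameRay_iff_inv_norm_smul_eq_of_ne hv0 hw0).2 h).exists_pos_left hv0 hw0
  rw [eq_one_of_smul_mem_pillowcase hv ht hw, one_smul]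

lemma exists_mem_pillowcase_inv_norm_smul_eq {p : EuclideanSpace ℝ (Fin 3)} (hp : ‖p‖ = 1) :
    ∃ v ∈ pillowcase, ‖v‖⁻¹ • v = p := by
  obtain ⟨t, ht, htp⟩ := exists_pos_smul_mem_pillowcase hp
  refine ⟨t • p, htp, ?_⟩
  rw [norm_smul, hp, Real.norm_of_nonneg ht.le, mul_one, smul_smul, inv_mul_cancel₀ ht.ne',
    one_smul]

instance (n : ℕ) : CompactSpace (Torus n) := by unfold Torus; infer_instance

noncomputable def torusInvariants (x : Torus 2) : EuclideanSpace ℝ (Fin 3) :=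
  !₂[(x 0 : ℂ).re, (x 1 : ℂ).re, (x 0 : ℂ).im * (x 1 : ℂ).im]

lemma continuous_torusInvariants : Continuous torusInvariants := by
  unfold torusInvariants
  fun_prop

lemma torusInvariants_torusConj (x : Torus 2) :
    torusInvariants (torusConj x) = torusInvariants x := by
  simp [torusInvariants, torusConj]

lemma torusInvariants_mem_pillowcase (x : Torus 2) : torusInvariants x ∈ pillowcase := by
  have h0 := Circle.re_sq_add_im_sq (x 0)
  have h1 := Circle.re_sq_add_im_sq (x 1)
  refine ⟨?_, ?_, ?_⟩
  · show (x 0 : ℂ).re ^ 2 ≤ 1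
    nlinarith [sq_nonneg (x 0 : ℂ).im]
  · show (x 1 : ℂ).re ^ 2 ≤ 1
    nlinarith [sq_nonneg (x 1 : ℂ).im]
  · show ((x 0 : ℂ).im * (x 1 : ℂ).im) ^ 2 =
      (1 - (x 0 : ℂ).re ^ 2) * (1 - (x 1 : ℂ).re ^ 2)
    linear_combination (1 - (x 1 : ℂ).re ^ 2) * h0 + (x 0 : ℂ).im ^ 2 * h1

lemma Torus.ext_two {x y : Torus 2} (h0 : x 0 = y 0) (h1 : x 1 = y 1) : x = y :=
  funext (Fin.forall_fin_two.2 ⟨h0, h1⟩)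

lemma eq_or_torusConj_eq_of_torusInvariants_eq {x y : Torus 2}
    (h : torusInvariants x = torusInvariants y) : x = y ∨ torusConj x = y := by
  have h0 : (y 0 : ℂ).re = (x 0 : ℂ).re := (congrArg (· 0) h).symm
  have h1 : (y 1 : ℂ).re = (x 1 : ℂ).re := (congrArg (· 1) h).symm
  have h2 : (y 0 : ℂ).im * (y 1 : ℂ).im = (x 0 : ℂ).im * (x 1 : ℂ).im :=
    (congrArg (· 2) h).symm
  have hconj : ∀ i, torusConj x i = (x i)⁻¹ := fun _ ↦ rfl
  -- In the mixed cases `Im x₀ Im x₁ = 0`, so one coordinate is real and fixed by inversion.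
  rcases Circle.eq_or_eq_inv_of_re_eq h0 with c0 | c0 <;>
    rcases Circle.eq_or_eq_inv_of_re_eq h1 with c1 | c1
  · exact .inl (Torus.ext_two c0.symm c1.symm)
  · rw [c0, c1, Circle.im_inv] at h2
    rcases mul_eq_zero.1 (by linarith : (x 0 : ℂ).im * (x 1 : ℂ).im = 0) with hz | hz
    · exact .inr <| Torus.ext_two (by rw [hconj, Circle.inv_eq_self_of_im_eq_zero hz, c0])
        (c1 ▸ hconj 1)
    · exact .inl (Torus.ext_two c0.symm (by rw [c1, Circle.inv_eq_self_of_im_eq_zero hz]))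
  · rw [c0, c1, Circle.im_inv] at h2
    rcases mul_eq_zero.1 (by linarith : (x 0 : ℂ).im * (x 1 : ℂ).im = 0) with hz | hz
    · exact .inl (Torus.ext_two (by rw [c0, Circle.inv_eq_self_of_im_eq_zero hz]) c1.symm)
    · exact .inr <| Torus.ext_two (c0 ▸ hconj 0)
        (by rw [hconj, Circle.inv_eq_self_of_im_eq_zero hz, c1])
  · exact .inr (Torus.ext_two c0.symm c1.symm)

lemma exists_torusInvariants_eq {v : EuclideanSpace ℝ (Fin 3)} (hv : v ∈ pillowcase) :
    ∃ x : Torus 2, torusInvariants x = v := by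
  obtain ⟨ha, hb, hc⟩ := hv
  have hsr : √(1 - v 0 ^ 2) * √(1 - v 1 ^ 2) = |v 2| := by
    rw [← Real.sqrt_mul (by linarith), ← hc, Real.sqrt_sq_eq_abs]
  obtain ⟨z, hz⟩ := Circle.exists_re_im_eq (a := v 0) (b := √(1 - v 0 ^ 2)) (by
    rw [Real.sq_sqrt (by linarith)]; ring)
  obtain ⟨w, hw⟩ := Circle.exists_re_im_eq (a := v 1) (b := √(1 - v 1 ^ 2)) (by
    rw [Real.sq_sqrt (by linarith)]; ring)
  refine ⟨![z, if 0 ≤ v 2 then w else w⁻¹], ?_⟩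
  ext i
  fin_cases i
  · exact hz.1
  · split_ifs
    · exact hw.1
    · exact (Circle.re_inv w).trans hw.1
  · show (z : ℂ).im * ((if 0 ≤ v 2 then w else w⁻¹ : Circle) : ℂ).im = v 2
    split_ifs with h2
    · rw [hz.2, hw.2, hsr, abs_of_nonneg h2]
    · rw [Circle.im_inv, hz.2, hw.2, mul_neg, hsr, abs_of_neg (not_le.1 h2), neg_neg]

noncomputable def torusToSphere (x : Torus 2) :
    Metric.sphere (0 : EuclideanSpace ℝ (Fin 3)) 1 :=
  ⟨‖torusInvariants x‖⁻¹ • torusInvariants x, mem_sphere_zero_iff_norm.2 <|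
    norm_smul_inv_norm (ne_zero_of_mem_pillowcase (torusInvariants_mem_pillowcase x))⟩

lemma torusToSphere_torusConj (x : Torus 2) : torusToSphere (torusConj x) = torusToSphere x := by
  simp only [torusToSphere, torusInvariants_torusConj]

lemma continuous_torusToSphere : Continuous torusToSphere := by
  refine Continuous.subtype_mk ((continuous_torusInvariants.norm.inv₀ fun x ↦ ?_).smul
    continuous_torusInvariants) _
  exact norm_ne_zero_iff.2 (ne_zero_of_mem_pillowcase (torusInvariants_mem_pillowcase x))

lemma surjective_torusToSphere : Function.Surjective torusToSphere := by
  rintro ⟨p, hp⟩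
  obtain ⟨v, hv, rfl⟩ := exists_mem_pillowcase_inv_norm_smul_eq (mem_sphere_zero_iff_norm.1 hp)
  obtain ⟨x, rfl⟩ := exists_torusInvariants_eq hv
  exact ⟨x, rfl⟩

lemma eq_or_torusConj_eq_of_torusToSphere_eq {x y : Torus 2}
    (h : torusToSphere x = torusToSphere y) : x = y ∨ torusConj x = y :=
  eq_or_torusConj_eq_of_torusInvariants_eq <| eq_of_inv_norm_smul_eq_of_mem_pillowcase
    (torusInvariants_mem_pillowcase x) (torusInvariants_mem_pillowcase y) (congrArg Subtype.val h)

noncomputable def torusQuotToSphere :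
    TorusQuot 2 → Metric.sphere (0 : EuclideanSpace ℝ (Fin 3)) 1 :=
  Quot.lift torusToSphere fun x _ h ↦ h ▸ (torusToSphere_torusConj x).symm

instance (n : ℕ) : CompactSpace (TorusQuot n) := by unfold TorusQuot; infer_instance

lemma bijective_torusQuotToSphere : Function.Bijective torusQuotToSphere := by
  refine ⟨?_, ?_⟩
  · rintro ⟨x⟩ ⟨y⟩ h
    rcases eq_or_torusConj_eq_of_torusToSphere_eq h with rfl | hxy
    · rfl
    · exact Quot.sound hxy
  · intro p
    obtain ⟨x, hx⟩ := surjective_torusToSphere p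
    exact ⟨Quot.mk _ x, hx⟩

/-- the quotient of the 2-torus S¹ × S¹ by the diagonal ℤ/2-action
of simultaneous complex conjugation is homeomorphic to the 2-sphere. -/
theorem torusQuot_two_homeo_sphere :
    Nonempty (TorusQuot 2 ≃ₜ Metric.sphere (0 : EuclideanSpace ℝ (Fin 3)) 1) :=
  ⟨Continuous.homeoOfEquivCompactToT2 (f := .ofBijective _ bijective_torusQuotToSphere)
    (continuous_quot_lift _ continuous_torusToSphere)⟩
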